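/- arXiv:2207.11199 — 2 statements merged into one kernel-verified Lean document; each statement's English description precedes it below -/
import Mathlib

section
/- Let Ω ⊂ ℝ^N be a bounded domain and for s ∈ (0,1] let λ₁^s(Ω) be the first Dirichlet eigenvalue of (−Δ)^s on Ω, defined as the infimum of ∫_{ℝ^N} |ξ|^{2s} |û(ξ)|² dξ over u ∈ H^s_0(Ω) with ‖u‖_{L²} = 1 (via Fourier transform). Then limsup_{s→1⁻} λ₁^s(Ω) ≤ λ₁^1(Ω). -/
/-
Test the infimum defining `λ₁^s(Ω)` with a fixed admissible `u` for `s = 1`. Since `u ∈ L²`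
vanishes outside the bounded set `Ω`, it is integrable, so `û` is continuous and bounded by
`‖u‖₁`. As `|ξ|^{2s} ≤ 1` on the unit ball and `|ξ|^{2s} ≤ |ξ|²` outside it, the integrands
`|ξ|^{2s} |û|²` are dominated by `‖u‖₁² 𝟙_{B(0,1)} + |ξ|² |û|²`, and dominated convergence gives
`∫ |ξ|^{2s} |û|² → ∫ |ξ|² |û|²` as `s → 1⁻`. Hence `limsup λ₁^s(Ω)` is at most the energy of every
admissible `u`, that is at most `λ₁^1(Ω)`; admissible functions exist (normalized smooth bumps).
-/

open MeasureTheory Real Set Filter Topology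
open scoped FourierTransform SchwartzMap

section Fourier

variable {V E : Type*} [NormedAddCommGroup V] [InnerProductSpace ℝ V] [MeasurableSpace V]
  [BorelSpace V] [FiniteDimensional ℝ V] [NormedAddCommGroup E] [NormedSpace ℂ E]

theorem Real.norm_fourier_le_integral_norm (u : V → E) (ξ : V) : ‖𝓕 u ξ‖ ≤ ∫ x, ‖u x‖ :=
  VectorFourier.norm_fourierIntegral_le_integral_norm _ _ _ _ _

theorem Real.continuous_fourier_of_integrable {u : V → E} (hu : Integrable u) :
    Continuous (𝓕 u) :=
  VectorFourier.fourierIntegral_continuous Real.continuous_fourierChar continuous_inner hu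

end Fourier

theorem MeasureTheory.MemLp.integrable_of_ae_notMem_eq_zero {α E : Type*} [MeasurableSpace α]
    [NormedAddCommGroup E] {μ : Measure α} {s : Set α} {p : ENNReal} {u : α → E}
    (hu : MemLp u p μ) (hp : 1 ≤ p) (hs : μ s ≠ ⊤) (h : ∀ᵐ x ∂μ, x ∉ s → u x = 0) :
    Integrable u μ :=
  haveI := isFiniteMeasure_restrict.2 hs
  IntegrableOn.integrable_of_ae_notMem_eq_zero ((hu.restrict s).integrable hp) h

section RpowWeight

variable {E : Type*} [NormedAddCommGroup E] {g : E → ℝ} {M p t : ℝ}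

theorem rpow_norm_mul_le_indicator_add (ξ : E) (hg₀ : 0 ≤ g ξ) (hgM : g ξ ≤ M) (ht : 0 ≤ t)
    (htp : t ≤ p) :
    ‖ξ‖ ^ t * g ξ ≤ (Metric.closedBall 0 1).indicator (fun _ ↦ M) ξ + ‖ξ‖ ^ p * g ξ := by
  rcases le_or_gt ‖ξ‖ 1 with h | h
  · have hξ : ξ ∈ Metric.closedBall (0 : E) 1 := mem_closedBall_zero_iff.2 h
    rw [indicator_of_mem hξ]
    have hle : ‖ξ‖ ^ t * g ξ ≤ 1 * M :=
      mul_le_mul (rpow_le_one (norm_nonneg _) h ht) hgM hg₀ zero_le_one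
    linarith [mul_nonneg (rpow_nonneg (norm_nonneg ξ) p) hg₀]
  · have hξ : ξ ∉ Metric.closedBall (0 : E) 1 := by simpa using h
    rw [indicator_of_notMem hξ, zero_add]
    exact mul_le_mul_of_nonneg_right (rpow_le_rpow_of_exponent_le h.le htp) hg₀

variable [MeasurableSpace E] [BorelSpace E] [ProperSpace E] {μ : Measure E}
  [IsFiniteMeasureOnCompacts μ]

theorem integrable_indicator_add_rpow_norm_mul (M : ℝ)
    (hint : Integrable (fun ξ ↦ ‖ξ‖ ^ p * g ξ) μ) :
    Integrable (fun ξ ↦ (Metric.closedBall 0 1).indicator (fun _ ↦ M) ξ + ‖ξ‖ ^ p * g ξ) μ :=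
  ((integrable_indicator_iff measurableSet_closedBall).2
    (integrableOn_const measure_closedBall_lt_top.ne)).add hint

theorem integrable_rpow_norm_mul_of_le (hg : AEStronglyMeasurable g μ) (hg₀ : ∀ ξ, 0 ≤ g ξ)
    (hgM : ∀ ξ, g ξ ≤ M) (hint : Integrable (fun ξ ↦ ‖ξ‖ ^ p * g ξ) μ) (ht : 0 ≤ t)
    (htp : t ≤ p) : Integrable (fun ξ ↦ ‖ξ‖ ^ t * g ξ) μ := by
  refine (integrable_indicator_add_rpow_norm_mul M hint).mono'
    ((measurable_norm.pow_const t).aestronglyMeasurable.mul hg) (ae_of_all _ fun ξ ↦ ?_)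
  rw [norm_of_nonneg (mul_nonneg (rpow_nonneg (norm_nonneg ξ) t) (hg₀ ξ))]
  exact rpow_norm_mul_le_indicator_add ξ (hg₀ ξ) (hgM ξ) ht htp

theorem tendsto_integral_rpow_norm_mul (hg : AEStronglyMeasurable g μ) (hg₀ : ∀ ξ, 0 ≤ g ξ)
    (hgM : ∀ ξ, g ξ ≤ M) (hint : Integrable (fun ξ ↦ ‖ξ‖ ^ p * g ξ) μ) (hp : 0 < p) :
    Tendsto (fun t ↦ ∫ ξ, ‖ξ‖ ^ t * g ξ ∂μ) (𝓝[<] p) (𝓝 (∫ ξ, ‖ξ‖ ^ p * g ξ ∂μ)) := by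
  have hIoo : ∀ᶠ t in 𝓝[<] p, t ∈ Ioo 0 p := Ioo_mem_nhdsLT hp
  refine tendsto_integral_filter_of_dominated_convergence _
    (hIoo.mono fun t _ ↦ (measurable_norm.pow_const t).aestronglyMeasurable.mul hg)
    (hIoo.mono fun t ht ↦ ae_of_all _ fun ξ ↦ ?_) (integrable_indicator_add_rpow_norm_mul M hint)
    (ae_of_all _ fun ξ ↦ ?_)
  · rw [norm_of_nonneg (mul_nonneg (rpow_nonneg (norm_nonneg ξ) t) (hg₀ ξ))]
    exact rpow_norm_mul_le_indicator_add ξ (hg₀ ξ) (hgM ξ) ht.1.le ht.2.le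
  · exact ((continuousAt_const_rpow' hp.ne').tendsto.mono_left nhdsWithin_le_nhds).mul_const _

end RpowWeight

section FourierWeight

variable {V F : Type*} [NormedAddCommGroup V] [InnerProductSpace ℝ V] [MeasurableSpace V]
  [BorelSpace V] [FiniteDimensional ℝ V] [NormedAddCommGroup F] [NormedSpace ℂ F] {u : V → F}
  {p t : ℝ}

theorem integrable_rpow_norm_mul_norm_fourier_sq (hu : Integrable u)
    (hint : Integrable (fun ξ ↦ ‖ξ‖ ^ p * ‖𝓕 u ξ‖ ^ 2)) (ht : 0 ≤ t) (htp : t ≤ p) :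
    Integrable (fun ξ ↦ ‖ξ‖ ^ t * ‖𝓕 u ξ‖ ^ 2) :=
  integrable_rpow_norm_mul_of_le
    ((continuous_fourier_of_integrable hu).norm.pow 2).aestronglyMeasurable
    (fun _ ↦ by positivity)
    (fun ξ ↦ pow_le_pow_left₀ (norm_nonneg _) (norm_fourier_le_integral_norm u ξ) 2) hint ht htp

theorem tendsto_integral_rpow_norm_mul_norm_fourier_sq (hu : Integrable u)
    (hint : Integrable (fun ξ ↦ ‖ξ‖ ^ p * ‖𝓕 u ξ‖ ^ 2)) (hp : 0 < p) :
    Tendsto (fun t ↦ ∫ ξ, ‖ξ‖ ^ t * ‖𝓕 u ξ‖ ^ 2) (𝓝[<] p) (𝓝 (∫ ξ, ‖ξ‖ ^ p * ‖𝓕 u ξ‖ ^ 2)) :=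
  tendsto_integral_rpow_norm_mul
    ((continuous_fourier_of_integrable hu).norm.pow 2).aestronglyMeasurable
    (fun _ ↦ by positivity)
    (fun ξ ↦ pow_le_pow_left₀ (norm_nonneg _) (norm_fourier_le_integral_norm u ξ) 2) hint hp

end FourierWeight

theorem tendsto_const_mul_nhdsLT {c : ℝ} (hc : 0 < c) (a : ℝ) :
    Tendsto (c * ·) (𝓝[<] a) (𝓝[<] (c * a)) :=
  tendsto_nhdsWithin_of_tendsto_nhds_of_eventually_within _
    ((continuous_const_mul c).tendsto a |>.mono_left nhdsWithin_le_nhds)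
    (eventually_nhdsWithin_of_forall fun _ hs ↦ mul_lt_mul_of_pos_left hs hc)

section Schwartz

variable {D F : Type*} [NormedAddCommGroup D] [NormedSpace ℝ D] [MeasurableSpace D] [BorelSpace D]
  {μ : Measure D} [μ.HasTemperateGrowth]

theorem SchwartzMap.integrable_pow_mul_norm_sq [SecondCountableTopology D] [NormedAddCommGroup F]
    [NormedSpace ℝ F] (f : 𝓢(D, F)) (k : ℕ) : Integrable (fun x ↦ ‖x‖ ^ k * ‖f x‖ ^ 2) μ := by
  have := (f.integrable_pow_mul μ k).mul_bdd (c := SchwartzMap.seminorm ℝ 0 0 f)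
    f.continuous.norm.aestronglyMeasurable
    (ae_of_all _ fun x ↦ by simpa using f.norm_le_seminorm ℝ x)
  simpa only [mul_assoc, ← sq] using this

theorem SchwartzMap.exists_integral_norm_smul_sq_eq_one [μ.IsOpenPosMeasure] (ψ : 𝓢(D, ℂ))
    {x₀ : D} (hψ : ψ x₀ ≠ 0) : ∃ c : ℂ, ∫ x, ‖c • ψ x‖ ^ 2 ∂μ = 1 := by
  have hI : 0 < ∫ x, ‖ψ x‖ ^ 2 ∂μ :=
    integral_pos_of_integrable_nonneg_nonzero (by fun_prop)
      ((memLp_two_iff_integrable_sq_norm ψ.continuous.aestronglyMeasurable).1 (ψ.memLp 2 μ))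
      (fun x ↦ by positivity) (by simpa using hψ)
  refine ⟨((√(∫ x, ‖ψ x‖ ^ 2 ∂μ))⁻¹ : ℝ), ?_⟩
  simp_rw [norm_smul, mul_pow, integral_const_mul, Complex.norm_real, norm_inv, norm_of_nonneg
    (sqrt_nonneg _), inv_pow, sq_sqrt hI.le, inv_mul_cancel₀ hI.ne']

end Schwartz

theorem exists_schwartzMap_ne_zero_of_forall_notMem_eq_zero {V : Type*} [NormedAddCommGroup V]
    [InnerProductSpace ℝ V] [FiniteDimensional ℝ V] {Ω : Set V} (hΩ : IsOpen Ω) {x₀ : V}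
    (hx₀ : x₀ ∈ Ω) : ∃ ψ : 𝓢(V, ℂ), ψ x₀ ≠ 0 ∧ ∀ x ∉ Ω, ψ x = 0 := by
  obtain ⟨r, hr, hball⟩ := Metric.isOpen_iff.1 hΩ x₀ hx₀
  let f : ContDiffBump x₀ := ⟨r / 2, r, half_pos hr, half_lt_self hr⟩
  have hsupp : HasCompactSupport (fun x ↦ (f x : ℂ)) :=
    f.hasCompactSupport.comp_left Complex.ofReal_zero
  refine ⟨hsupp.toSchwartzMap (Complex.ofRealCLM.contDiff.comp f.contDiff), ?_, fun x hx ↦ ?_⟩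
  · change (f x₀ : ℂ) ≠ 0
    simp [f.one_of_mem_closedBall (Metric.mem_closedBall_self f.rIn_pos.le)]
  · change (f x : ℂ) = 0
    rw [Complex.ofReal_eq_zero, ← Function.notMem_support, f.support_eq]
    exact fun h ↦ hx (hball h)

section FractionalEnergy

variable {V : Type*} [NormedAddCommGroup V] [InnerProductSpace ℝ V] [FiniteDimensional ℝ V]
  [MeasurableSpace V] [BorelSpace V]

/-- `λ₁^s(Ω)` is the infimum of this set. -/
def fractionalEnergies (Ω : Set V) (s : ℝ) : Set ℝ :=
  {c : ℝ | ∃ u : V → ℂ, (∀ᵐ x, x ∉ Ω → u x = 0) ∧ MemLp u 2 volume ∧ ∫ x, ‖u x‖ ^ 2 = 1 ∧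
    Integrable (fun ξ ↦ ‖ξ‖ ^ (2 * s) * ‖𝓕 u ξ‖ ^ 2) ∧ c = ∫ ξ, ‖ξ‖ ^ (2 * s) * ‖𝓕 u ξ‖ ^ 2}

theorem nonneg_of_mem_fractionalEnergies {Ω : Set V} {s c : ℝ}
    (hc : c ∈ fractionalEnergies Ω s) : 0 ≤ c := by
  obtain ⟨u, -, -, -, -, rfl⟩ := hc
  exact integral_nonneg fun ξ ↦ by positivity

theorem nonempty_fractionalEnergies_one {Ω : Set V} (hΩo : IsOpen Ω) (hΩne : Ω.Nonempty) :
    (fractionalEnergies Ω 1).Nonempty := by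
  obtain ⟨x₀, hx₀⟩ := hΩne
  obtain ⟨ψ, hψx₀, hψΩ⟩ := exists_schwartzMap_ne_zero_of_forall_notMem_eq_zero hΩo hx₀
  obtain ⟨c, hc⟩ := ψ.exists_integral_norm_smul_sq_eq_one (μ := volume) hψx₀
  refine ⟨_, ⇑(c • ψ), ae_of_all _ fun x hx ↦ by simp [hψΩ x hx], (c • ψ).memLp 2, hc, ?_, rfl⟩
  rw [← SchwartzMap.fourier_coe]
  simpa only [mul_one, rpow_two] using (𝓕 (c • ψ)).integrable_pow_mul_norm_sq (μ := volume) 2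

theorem sInf_fractionalEnergies_nonneg (Ω : Set V) (s : ℝ) : 0 ≤ sInf (fractionalEnergies Ω s) :=
  Real.sInf_nonneg fun _ ↦ nonneg_of_mem_fractionalEnergies

theorem sInf_fractionalEnergies_le {Ω : Set V} {u : V → ℂ} (hvan : ∀ᵐ x, x ∉ Ω → u x = 0)
    (hmem : MemLp u 2 volume) (hnorm : ∫ x, ‖u x‖ ^ 2 = 1) (hu : Integrable u)
    (hint : Integrable (fun ξ ↦ ‖ξ‖ ^ (2 : ℝ) * ‖𝓕 u ξ‖ ^ 2)) {s : ℝ} (hs₀ : 0 ≤ s) (hs₁ : s ≤ 1) :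
    sInf (fractionalEnergies Ω s) ≤ ∫ ξ, ‖ξ‖ ^ (2 * s) * ‖𝓕 u ξ‖ ^ 2 :=
  csInf_le ⟨0, fun _ ↦ nonneg_of_mem_fractionalEnergies⟩ ⟨u, hvan, hmem, hnorm,
    integrable_rpow_norm_mul_norm_fourier_sq hu hint (by positivity) (by linarith), rfl⟩

end FractionalEnergy

theorem limsup_first_eigenvalue_le_general (N : ℕ)
    (Ω : Set (EuclideanSpace ℝ (Fin N))) (hΩo : IsOpen Ω)
    (hΩb : Bornology.IsBounded Ω) (hΩne : Ω.Nonempty)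
    (lam : ℝ → ℝ)
    (hlam : ∀ s ∈ Ioc (0:ℝ) 1, lam s =
      sInf {c : ℝ | ∃ u : EuclideanSpace ℝ (Fin N) → ℂ,
        (∀ᵐ x, x ∉ Ω → u x = 0) ∧
        MeasureTheory.MemLp u 2 volume ∧
        (∫ x, ‖u x‖ ^ 2) = 1 ∧
        Integrable (fun ξ => ‖ξ‖ ^ (2 * s) * ‖𝓕 u ξ‖ ^ 2) ∧
        c = ∫ ξ, ‖ξ‖ ^ (2 * s) * ‖𝓕 u ξ‖ ^ 2}) :
    Filter.limsup lam (𝓝[<] (1:ℝ)) ≤ lam 1 := by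
  have hlam' : ∀ s ∈ Ioc (0 : ℝ) 1, lam s = sInf (fractionalEnergies Ω s) := hlam
  have hIoo : ∀ᶠ s in 𝓝[<] (1 : ℝ), s ∈ Ioo 0 1 := Ioo_mem_nhdsLT one_pos
  rw [hlam' 1 ⟨one_pos, le_rfl⟩]
  refine le_csInf (nonempty_fractionalEnergies_one hΩo hΩne) ?_
  rintro _ ⟨u, hvan, hmem, hnorm, hint, rfl⟩
  rw [mul_one] at hint ⊢
  have hu : Integrable u :=
    hmem.integrable_of_ae_notMem_eq_zero one_le_two hΩb.measure_lt_top.ne hvan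
  have hlim : Tendsto (fun s : ℝ ↦ ∫ ξ, ‖ξ‖ ^ (2 * s) * ‖𝓕 u ξ‖ ^ 2) (𝓝[<] 1)
      (𝓝 (∫ ξ, ‖ξ‖ ^ (2 : ℝ) * ‖𝓕 u ξ‖ ^ 2)) := by
    have h2s : Tendsto (2 * ·) (𝓝[<] (1 : ℝ)) (𝓝[<] 2) := by
      simpa using tendsto_const_mul_nhdsLT two_pos (1 : ℝ)
    exact (tendsto_integral_rpow_norm_mul_norm_fourier_sq hu hint two_pos).comp h2s
  have hle : ∀ᶠ s in 𝓝[<] (1 : ℝ), lam s ≤ ∫ ξ, ‖ξ‖ ^ (2 * s) * ‖𝓕 u ξ‖ ^ 2 :=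
    hIoo.mono fun s hs ↦ (hlam' s (Ioo_subset_Ioc_self hs)).trans_le
      (sInf_fractionalEnergies_le hvan hmem hnorm hu hint hs.1.le hs.2.le)
  have hcobdd : IsCoboundedUnder (· ≤ ·) (𝓝[<] (1 : ℝ)) lam :=
    isCoboundedUnder_le_of_eventually_le _ (x := 0) <| hIoo.mono fun s hs ↦
      (hlam' s (Ioo_subset_Ioc_self hs)).symm ▸ sInf_fractionalEnergies_nonneg Ω s
  exact (limsup_le_limsup hle hcobdd hlim.isBoundedUnder_le).trans hlim.limsup_eq.le

/-- Let `λ₁^s(Ω)` be the first Dirichlet eigenvalue of `(−Δ)^s` on a bounded domain `Ω`,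
defined via the Fourier transform as the infimum of `∫ |ξ|^{2s} |û(ξ)|² dξ` over
`L²`-normalized `u ∈ H^s_0(Ω)`. Then `limsup_{s→1⁻} λ₁^s(Ω) ≤ λ₁^1(Ω)`. -/
theorem limsup_first_eigenvalue_le (N : ℕ) (hN : 1 ≤ N)
    (Ω : Set (EuclideanSpace ℝ (Fin N))) (hΩo : IsOpen Ω)
    (hΩb : Bornology.IsBounded Ω) (hΩne : Ω.Nonempty)
    (lam : ℝ → ℝ)
    (hlam : ∀ s ∈ Ioc (0:ℝ) 1, lam s =
      sInf {c : ℝ | ∃ u : EuclideanSpace ℝ (Fin N) → ℂ,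
        (∀ᵐ x, x ∉ Ω → u x = 0) ∧
        MeasureTheory.MemLp u 2 volume ∧
        (∫ x, ‖u x‖ ^ 2) = 1 ∧
        Integrable (fun ξ => ‖ξ‖ ^ (2 * s) * ‖𝓕 u ξ‖ ^ 2) ∧
        c = ∫ ξ, ‖ξ‖ ^ (2 * s) * ‖𝓕 u ξ‖ ^ 2}) :
    Filter.limsup lam (𝓝[<] (1:ℝ)) ≤ lam 1 :=
  limsup_first_eigenvalue_le_general N Ω hΩo hΩb hΩne lam hlam
end

section
/- Let s ∈ (0,1), N ≥ 1, R > 0, and let φ be a nonnegative function supported in the closed ball B_R(x₀) with φ(y) ≤ C(1 − |y − x₀|²/R²)^s for y ∈ B_R(x₀). Then for any bounded measurable w ≥ 0 on ℝ^N, the double integral ∫_{ℝ^N∖B_R(x₀)} w(x) ∫_{B_R(x₀)} φ(y)/|x−y|^{N+2s} dy dx is finite and nonnegative. -/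
/-!
For `y` inside and `x` outside the ball,
`1 - |y - x₀|²/R² ≤ (2/R)(R - |y - x₀|) ≤ (2/R)|x - y|`, so the integrand is dominated by a
multiple of the kernel `|x - y|^{-(N+s)}`. By Tonelli the kernel may be integrated in `x` first;
since `x` stays outside the ball of radius `δ(y) = R - |y - x₀|` around `y`, that integral is at
most a multiple of `δ(y)^{-s}`, which is integrable over the ball because `s < 1`. Both radial
integrals are computed in polar coordinates.
-/

open MeasureTheory Real Set Metric

open scoped ENNReal

theorem lintegral_Ioi_rpow_of_lt {a c : ℝ} (ha : a < -1) (hc : 0 < c) :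
    ∫⁻ r in Ioi c, ENNReal.ofReal (r ^ a) = ENNReal.ofReal (-c ^ (a + 1) / (a + 1)) := by
  rw [← integral_Ioi_rpow_of_lt ha hc, ofReal_integral_eq_lintegral_ofReal
    (integrableOn_Ioi_rpow_of_lt ha hc)]
  filter_upwards [ae_restrict_mem measurableSet_Ioi] with r hr
  exact rpow_nonneg (hc.trans hr).le a

section HaarMeasure

variable {E : Type*} [NormedAddCommGroup E] [NormedSpace ℝ E] [Nontrivial E]
  [MeasurableSpace E] [BorelSpace E] [FiniteDimensional ℝ E]
  (μ : Measure E) [μ.IsAddHaarMeasure]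

theorem lintegral_fun_norm_addHaar {f : ℝ → ℝ≥0∞} (hf : Measurable f) :
    ∫⁻ x, f ‖x‖ ∂μ = μ.toSphere univ *
      ∫⁻ r in Ioi (0 : ℝ), ENNReal.ofReal (r ^ (Module.finrank ℝ E - 1)) * f r := by
  have hmeas : Measurable fun p : sphere (0 : E) 1 × Ioi (0 : ℝ) => f p.2 :=
    hf.comp (measurable_subtype_coe.comp measurable_snd)
  calc
    ∫⁻ x, f ‖x‖ ∂μ = ∫⁻ x : ({0}ᶜ : Set E), f ‖x.1‖ ∂(μ.comap (↑)) := by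
      rw [lintegral_subtype_comap (measurableSet_singleton 0).compl (fun x => f ‖x‖),
        restrict_compl_singleton]
    _ = ∫⁻ p : sphere (0 : E) 1 × Ioi (0 : ℝ), f p.2
          ∂(μ.toSphere.prod (.volumeIoiPow (Module.finrank ℝ E - 1))) := by
      simpa using μ.measurePreserving_homeomorphUnitSphereProd.lintegral_comp hmeas
    _ = μ.toSphere univ *
          ∫⁻ r : Ioi (0 : ℝ), f r ∂(Measure.volumeIoiPow (Module.finrank ℝ E - 1)) := by
      rw [lintegral_prod _ hmeas.aemeasurable]
      simp only [lintegral_const]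
      exact mul_comm _ _
    _ = _ := by
      rw [Measure.volumeIoiPow, lintegral_withDensity_eq_lintegral_mul _
        (measurable_subtype_coe.pow_const _).ennreal_ofReal
        (show Measurable fun r : Ioi (0 : ℝ) => f r from hf.comp measurable_subtype_coe)]
      exact congrArg _ (lintegral_subtype_comap measurableSet_Ioi
        fun r => ENNReal.ofReal (r ^ (Module.finrank ℝ E - 1)) * f r)

theorem setLIntegral_preimage_norm_sub {f : ℝ → ℝ≥0∞} (hf : Measurable f) {T : Set ℝ}
    (hT : MeasurableSet T) (y : E) :
    ∫⁻ x in (‖· - y‖) ⁻¹' T, f ‖x - y‖ ∂μ = μ.toSphere univ *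
      ∫⁻ r in T ∩ Ioi 0, ENNReal.ofReal (r ^ (Module.finrank ℝ E - 1)) * f r := by
  have hind (x : E) :
      ((‖· - y‖) ⁻¹' T).indicator (fun x => f ‖x - y‖) x = T.indicator f ‖x - y‖ :=
    indicator_comp_right fun x => ‖x - y‖
  rw [← lintegral_indicator (hT.preimage (by fun_prop))]
  simp_rw [hind]
  rw [lintegral_sub_right_eq_self (fun x => T.indicator f ‖x‖) y,
    lintegral_fun_norm_addHaar μ (hf.indicator hT)]
  simp_rw [← indicator_mul_right T
    (fun r => ENNReal.ofReal (r ^ (Module.finrank ℝ E - 1))) f]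
  rw [lintegral_indicator hT, Measure.restrict_restrict hT]

theorem lintegral_compl_ball_norm_sub_rpow {s δ : ℝ} (hs : 0 < s) (hδ : 0 < δ) (y : E) :
    ∫⁻ x in (ball y δ)ᶜ, ENNReal.ofReal (‖x - y‖ ^ (-(Module.finrank ℝ E + s))) ∂μ
      = μ.toSphere univ * ENNReal.ofReal (δ ^ (-s) / s) := by
  have hpre : (ball y δ)ᶜ = (‖· - y‖) ⁻¹' Ici δ := by ext; simp [dist_eq_norm]
  rw [hpre, setLIntegral_preimage_norm_sub μ
    (f := fun r => ENNReal.ofReal (r ^ (-(Module.finrank ℝ E + s)))) (by fun_prop)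
    measurableSet_Ici,
    inter_eq_left.mpr (Ici_subset_Ioi.mpr hδ), setLIntegral_congr Ioi_ae_eq_Ici.symm]
  congr 1
  calc
    _ = ∫⁻ r in Ioi δ, ENNReal.ofReal (r ^ (-s - 1)) := by
      refine setLIntegral_congr_fun measurableSet_Ioi fun r hr => ?_
      have hr0 : 0 < r := hδ.trans hr
      rw [← ENNReal.ofReal_mul (by positivity), ← rpow_natCast, ← rpow_add hr0,
        Nat.cast_sub Module.finrank_pos]
      congr 2
      push_cast
      ring
    _ = _ := by
      rw [lintegral_Ioi_rpow_of_lt (by linarith) hδ, sub_add_cancel, div_neg, neg_div, neg_neg]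

theorem lintegral_ball_rpow_neg_sub_norm_lt_top {s : ℝ} (hs : s < 1) (R : ℝ) (x₀ : E) :
    ∫⁻ y in ball x₀ R, ENNReal.ofReal ((R - ‖y - x₀‖) ^ (-s)) ∂μ < ⊤ := by
  have hpre : ball x₀ R = (‖· - x₀‖) ⁻¹' Iio R := by ext; simp [dist_eq_norm]
  rw [hpre, setLIntegral_preimage_norm_sub μ
    (f := fun r => ENNReal.ofReal ((R - r) ^ (-s))) (by fun_prop) measurableSet_Iio, inter_comm,
    Ioi_inter_Iio]
  refine ENNReal.mul_lt_top (measure_lt_top _ _) ?_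
  have hint : IntervalIntegrable (fun r : ℝ => r ^ (Module.finrank ℝ E - 1) * (R - r) ^ (-s))
      volume 0 R := by
    have := (intervalIntegral.intervalIntegrable_rpow' (a := 0) (b := R) (r := -s)
      (by linarith)).comp_sub_left R
    simp only [sub_zero, sub_self] at this
    exact this.symm.continuousOn_mul (continuous_pow _).continuousOn
  calc
    _ = ∫⁻ r in Ioo 0 R, ENNReal.ofReal (r ^ (Module.finrank ℝ E - 1) * (R - r) ^ (-s)) := by
      refine setLIntegral_congr_fun measurableSet_Ioo fun r hr => ?_
      rw [ENNReal.ofReal_mul (pow_nonneg hr.1.le _)]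
    _ < ⊤ :=
      (hint.def'.mono_set (Ioo_subset_Ioc_self.trans Ioc_subset_uIoc)).setLIntegral_lt_top

theorem lintegral_compl_ball_lintegral_ball_norm_sub_rpow_lt_top {s : ℝ} (hs₀ : 0 < s)
    (hs₁ : s < 1) (R : ℝ) (x₀ : E) :
    ∫⁻ x in (ball x₀ R)ᶜ, ∫⁻ y in ball x₀ R,
      ENNReal.ofReal (‖x - y‖ ^ (-(Module.finrank ℝ E + s))) ∂μ ∂μ < ⊤ := by
  set A := μ.toSphere univ * ENNReal.ofReal s⁻¹
  have hA : A ≠ ⊤ := ENNReal.mul_ne_top (measure_ne_top _ _) ENNReal.ofReal_ne_top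
  have hinner : ∀ y ∈ ball x₀ R,
      ∫⁻ x in (ball x₀ R)ᶜ,
          ENNReal.ofReal (‖x - y‖ ^ (-(Module.finrank ℝ E + s))) ∂μ
        ≤ A * ENNReal.ofReal ((R - ‖y - x₀‖) ^ (-s)) := by
    intro y hy
    have hδ : 0 < R - ‖y - x₀‖ := sub_pos.mpr (mem_ball_iff_norm.mp hy)
    have hsub : (ball x₀ R)ᶜ ⊆ (ball y (R - ‖y - x₀‖))ᶜ :=
      compl_subset_compl.mpr (ball_subset_ball' (by rw [dist_eq_norm]; linarith))
    calc
      _ ≤ _ := lintegral_mono_set hsub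
      _ = A * ENNReal.ofReal ((R - ‖y - x₀‖) ^ (-s)) := by
        rw [lintegral_compl_ball_norm_sub_rpow μ hs₀ hδ, div_eq_mul_inv,
          ENNReal.ofReal_mul (by positivity), mul_assoc, mul_comm (ENNReal.ofReal _)]
  calc
    _ = ∫⁻ y in ball x₀ R, ∫⁻ x in (ball x₀ R)ᶜ,
          ENNReal.ofReal (‖x - y‖ ^ (-(Module.finrank ℝ E + s))) ∂μ ∂μ :=
      lintegral_lintegral_swap (by fun_prop)
    _ ≤ ∫⁻ y in ball x₀ R, A * ENNReal.ofReal ((R - ‖y - x₀‖) ^ (-s)) ∂μ :=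
      setLIntegral_mono' measurableSet_ball hinner
    _ < ⊤ := by
      rw [lintegral_const_mul' _ _ hA]
      exact ENNReal.mul_lt_top hA.lt_top (lintegral_ball_rpow_neg_sub_norm_lt_top μ hs₁ R x₀)

end HaarMeasure

theorem one_sub_sq_div_sq_le {R : ℝ} (hR : R ≠ 0) (t : ℝ) :
    1 - t ^ 2 / R ^ 2 ≤ 2 / R * (R - t) := by
  have h : 2 / R * (R - t) - (1 - t ^ 2 / R ^ 2) = (R - t) ^ 2 / R ^ 2 := by field_simp; ring
  linarith [div_nonneg (sq_nonneg (R - t)) (sq_nonneg R)]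

theorem sub_norm_sub_le_norm_sub_of_notMem_ball {E : Type*} [SeminormedAddCommGroup E]
    {x₀ x : E} {R : ℝ} (hx : x ∉ ball x₀ R) (y : E) : R - ‖y - x₀‖ ≤ ‖x - y‖ := by
  have := norm_sub_le_norm_sub_add_norm_sub x y x₀
  rw [mem_ball_iff_norm, not_lt] at hx
  linarith

theorem mul_div_rpow_le_of_mem_ball {E : Type*} [SeminormedAddCommGroup E]
    {s R C M n a b : ℝ} (hs : 0 ≤ s) (hR : 0 < R) (hC : 0 ≤ C) (hM : 0 ≤ M) {x₀ x y : E}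
    (hy : y ∈ ball x₀ R) (hx : x ∉ ball x₀ R) (ha : a ≤ M) (hb₀ : 0 ≤ b)
    (hb : b ≤ C * (1 - ‖y - x₀‖ ^ 2 / R ^ 2) ^ s) :
    a * b / ‖x - y‖ ^ (n + 2 * s) ≤ M * C * (2 / R) ^ s * ‖x - y‖ ^ (-(n + s)) := by
  have hyR : ‖y - x₀‖ < R := mem_ball_iff_norm.mp hy
  have hdist := sub_norm_sub_le_norm_sub_of_notMem_ball hx y
  have hd : 0 < ‖x - y‖ := by linarith
  have hbase : 0 ≤ 1 - ‖y - x₀‖ ^ 2 / R ^ 2 := by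
    rw [sub_nonneg, div_le_one (by positivity)]
    exact pow_le_pow_left₀ (norm_nonneg _) hyR.le 2
  have hb' : b ≤ C * (2 / R) ^ s * ‖x - y‖ ^ s := calc
    b ≤ C * (1 - ‖y - x₀‖ ^ 2 / R ^ 2) ^ s := hb
    _ ≤ C * (2 / R * ‖x - y‖) ^ s := by
      gcongr
      exact (one_sub_sq_div_sq_le hR.ne' _).trans (by gcongr)
    _ = C * (2 / R) ^ s * ‖x - y‖ ^ s := by rw [mul_rpow (by positivity) hd.le, mul_assoc]
  calc
    a * b / ‖x - y‖ ^ (n + 2 * s)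
        ≤ M * (C * (2 / R) ^ s * ‖x - y‖ ^ s) / ‖x - y‖ ^ (n + 2 * s) := by gcongr
    _ = M * C * (2 / R) ^ s * ‖x - y‖ ^ (-(n + s)) := by
      rw [mul_div_assoc, mul_div_assoc, ← rpow_sub hd]
      ring_nf

theorem double_integral_finite_nonneg_general (N : ℕ) (hN : 1 ≤ N) (s R C M : ℝ)
    (hs : s ∈ Ioo (0:ℝ) 1) (hR : 0 < R) (hC : 0 ≤ C) (hM : 0 ≤ M)
    (x₀ : EuclideanSpace ℝ (Fin N)) (φ w : EuclideanSpace ℝ (Fin N) → ℝ)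
    (hφnn : ∀ y, 0 ≤ φ y)
    (hφbd : ∀ y ∈ ball x₀ R, φ y ≤ C * (1 - ‖y - x₀‖ ^ 2 / R ^ 2) ^ s)
    (hw : ∀ x, 0 ≤ w x ∧ w x ≤ M) :
    (∫⁻ x in (ball x₀ R)ᶜ, ∫⁻ y in ball x₀ R,
        ENNReal.ofReal (w x * φ y / ‖x - y‖ ^ ((N : ℝ) + 2 * s))) < ⊤ ∧
    0 ≤ ∫ x in (ball x₀ R)ᶜ, ∫ y in ball x₀ R,
        w x * φ y / ‖x - y‖ ^ ((N : ℝ) + 2 * s) := by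
  have : NeZero N := ⟨by omega⟩
  set K := M * C * (2 / R) ^ s
  have hK : 0 ≤ K := by positivity
  refine ⟨?_, setIntegral_nonneg measurableSet_ball.compl fun x _ =>
    setIntegral_nonneg measurableSet_ball fun y _ =>
      div_nonneg (mul_nonneg (hw x).1 (hφnn y)) (by positivity)⟩
  calc
    _ ≤ ∫⁻ x in (ball x₀ R)ᶜ, ∫⁻ y in ball x₀ R,
          ENNReal.ofReal K * ENNReal.ofReal (‖x - y‖ ^ (-((N : ℝ) + s))) :=
      setLIntegral_mono' measurableSet_ball.compl fun x hx =>
        setLIntegral_mono' measurableSet_ball fun y hy => by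
          rw [← ENNReal.ofReal_mul hK]
          exact ENNReal.ofReal_le_ofReal <| mul_div_rpow_le_of_mem_ball hs.1.le hR hC hM hy hx
            (hw x).2 (hφnn y) (hφbd y hy)
    _ = ENNReal.ofReal K * ∫⁻ x in (ball x₀ R)ᶜ, ∫⁻ y in ball x₀ R,
          ENNReal.ofReal (‖x - y‖ ^ (-((N : ℝ) + s))) := by
      simp_rw [lintegral_const_mul' _ _ ENNReal.ofReal_ne_top]
    _ < ⊤ := ENNReal.mul_lt_top ENNReal.ofReal_lt_top <| by
      simpa only [finrank_euclideanSpace_fin] using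
        lintegral_compl_ball_lintegral_ball_norm_sub_rpow_lt_top volume hs.1 hs.2 R x₀

/-- If `φ ≥ 0` is supported in `closedBall x₀ R` with `φ(y) ≤ C (1 − |y−x₀|²/R²)^s` in the
ball, and `0 ≤ w ≤ M` is measurable on `ℝ^N`, then
`∫_{ℝ^N ∖ B_R(x₀)} w(x) ∫_{B_R(x₀)} φ(y)/|x−y|^{N+2s} dy dx` is finite and nonnegative. -/
theorem double_integral_finite_nonneg (N : ℕ) (hN : 1 ≤ N) (s R C M : ℝ)
    (hs : s ∈ Ioo (0:ℝ) 1) (hR : 0 < R) (hC : 0 ≤ C) (hM : 0 ≤ M)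
    (x₀ : EuclideanSpace ℝ (Fin N)) (φ w : EuclideanSpace ℝ (Fin N) → ℝ)
    (hφm : Measurable φ) (hwm : Measurable w)
    (hφnn : ∀ y, 0 ≤ φ y) (hφsupp : ∀ y ∉ closedBall x₀ R, φ y = 0)
    (hφbd : ∀ y ∈ ball x₀ R, φ y ≤ C * (1 - ‖y - x₀‖ ^ 2 / R ^ 2) ^ s)
    (hw : ∀ x, 0 ≤ w x ∧ w x ≤ M) :
    (∫⁻ x in (ball x₀ R)ᶜ, ∫⁻ y in ball x₀ R,
        ENNReal.ofReal (w x * φ y / ‖x - y‖ ^ ((N : ℝ) + 2 * s))) < ⊤ ∧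
    0 ≤ ∫ x in (ball x₀ R)ᶜ, ∫ y in ball x₀ R,
        w x * φ y / ‖x - y‖ ^ ((N : ℝ) + 2 * s) :=
  double_integral_finite_nonneg_general N hN s R C M hs hR hC hM x₀ φ w hφnn hφbd hw
end
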